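/- For any symmetric elements y₁,…,y_s, y'₁,…,y'_t ∈ A⁺ and skew-symmetric elements z₁, z₂ ∈ A⁻ of the algebra (A,*), the product y_{σ(1)}⋯y_{σ(s)} z₁ y'_{ρ(1)}⋯y'_{ρ(t)} z₂ is independent of the permutations σ ∈ S_s and ρ ∈ S_t: it equals y₁⋯y_s z₁ y'₁⋯y'_t z₂. -/

import Mathlib

/-!
Symmetric elements are upper triangular, and on upper triangular matrices the diagonal
entries are multiplicative, so the diagonal entries of `y_{σ(1)}⋯y_{σ(s)}` do not depend
on `σ`. Sandwiching an upper triangular `P` and `Q` between two skew elements gives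
`P z₁ Q z₂ = -a₁ a₂ P₀₀ Q₁₁ e₀₂`, which only sees these diagonal entries.
-/

namespace Matrix

variable {m R : Type*}

theorem isUpperTriangular_fin_three [Zero R] (a b c e f i : R) :
    (!![a, b, c; 0, e, f; 0, 0, i]).IsUpperTriangular := by
  intro j k hjk
  fin_cases j <;> fin_cases k <;> simp_all

variable [LinearOrder m] [Fintype m]

theorem IsUpperTriangular.mul_apply_self [NonUnitalNonAssocSemiring R] {M N : Matrix m m R}
    (hM : M.IsUpperTriangular) (hN : N.IsUpperTriangular) (i : m) :
    (M * N) i i = M i i * N i i := by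
  rw [mul_apply, Finset.sum_eq_single i]
  · intro k _ hki
    rcases hki.lt_or_gt with hlt | hgt
    · rw [hM hlt, zero_mul]
    · rw [hN hgt, mul_zero]
  · simp

variable [DecidableEq m] [Semiring R]

theorem isUpperTriangular_list_prod {l : List (Matrix m m R)}
    (hl : ∀ M ∈ l, M.IsUpperTriangular) : l.prod.IsUpperTriangular :=
  list_prod_mem (S := blockTriangularSubsemiring R id) hl

theorem isUpperTriangular_prod_ofFn {n : ℕ} {f : Fin n → Matrix m m R}
    (hf : ∀ k, (f k).IsUpperTriangular) : (List.ofFn f).prod.IsUpperTriangular :=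
  isUpperTriangular_list_prod (by simpa [List.mem_ofFn] using hf)

theorem IsUpperTriangular.list_prod_apply_self {l : List (Matrix m m R)}
    (hl : ∀ M ∈ l, M.IsUpperTriangular) (i : m) :
    l.prod i i = (l.map fun M => M i i).prod := by
  induction l with
  | nil => simp
  | cons M l ih =>
    have hl' : ∀ N ∈ l, N.IsUpperTriangular := fun N hN => hl N (List.mem_cons_of_mem M hN)
    rw [List.prod_cons, (hl M List.mem_cons_self).mul_apply_self
      (isUpperTriangular_list_prod hl') i, ih hl', List.map_cons, List.prod_cons]

theorem IsUpperTriangular.prod_ofFn_apply_self {n : ℕ} {f : Fin n → Matrix m m R}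
    (hf : ∀ k, (f k).IsUpperTriangular) (i : m) :
    (List.ofFn f).prod i i = (List.ofFn fun k => f k i i).prod := by
  rw [IsUpperTriangular.list_prod_apply_self (by simpa [List.mem_ofFn] using hf), List.map_ofFn]
  rfl

theorem IsUpperTriangular.prod_ofFn_perm_apply_self {R : Type*} [CommSemiring R] {n : ℕ}
    {f : Fin n → Matrix m m R} (hf : ∀ k, (f k).IsUpperTriangular) (σ : Equiv.Perm (Fin n))
    (i : m) : (List.ofFn fun k => f (σ k)).prod i i = (List.ofFn f).prod i i := by
  rw [prod_ofFn_apply_self (fun k => hf (σ k)), prod_ofFn_apply_self hf, List.prod_ofFn,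
    List.prod_ofFn, Equiv.prod_comp σ fun k => f k i i]

theorem IsUpperTriangular.mul_skew_mul_mul_skew {K : Type*} [CommRing K]
    {P Q : Matrix (Fin 3) (Fin 3) K} (hP : P.IsUpperTriangular) (hQ : Q.IsUpperTriangular)
    (a₁ a₂ : K) :
    P * !![0, a₁, 0; 0, 0, -a₁; 0, 0, 0] * Q * !![0, a₂, 0; 0, 0, -a₂; 0, 0, 0]
      = !![0, 0, -(a₁ * a₂ * P 0 0 * Q 1 1); 0, 0, 0; 0, 0, 0] := by
  have hP₁₀ := hP (by decide : (0 : Fin 3) < 1)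
  have hP₂₀ := hP (by decide : (0 : Fin 3) < 2)
  have hP₂₁ := hP (by decide : (1 : Fin 3) < 2)
  have hQ₁₀ := hQ (by decide : (0 : Fin 3) < 1)
  have hQ₂₀ := hQ (by decide : (0 : Fin 3) < 2)
  have hQ₂₁ := hQ (by decide : (1 : Fin 3) < 2)
  ext i j
  fin_cases i <;> fin_cases j <;>
    simp [mul_apply, Fin.sum_univ_three, hP₁₀, hP₂₀, hP₂₁, hQ₁₀, hQ₂₀, hQ₂₁]
  ring

end Matrix

/-- For symmetric `y₁,…,y_s, y'₁,…,y'_t ∈ A⁺` and skew `z₁, z₂ ∈ A⁻`, the product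
`y_{σ(1)}⋯y_{σ(s)} z₁ y'_{ρ(1)}⋯y'_{ρ(t)} z₂` does not depend on the
permutations `σ, ρ`. -/
theorem stmt_16 (K : Type*) [Field K]
    (Aplus Aminus : Set (Matrix (Fin 3) (Fin 3) K))
    (hAp : Aplus = {M | ∃ d a c g : K, M = !![d, a, c; 0, g, a; 0, 0, d]})
    (hAm : Aminus = {M | ∃ a : K, M = !![0, a, 0; 0, 0, -a; 0, 0, 0]})
    (s t : ℕ) (Y : Fin s → Matrix (Fin 3) (Fin 3) K)
    (Y' : Fin t → Matrix (Fin 3) (Fin 3) K)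
    (hY : ∀ i, Y i ∈ Aplus) (hY' : ∀ j, Y' j ∈ Aplus)
    (z₁ z₂ : Matrix (Fin 3) (Fin 3) K) (hz₁ : z₁ ∈ Aminus) (hz₂ : z₂ ∈ Aminus)
    (σ : Equiv.Perm (Fin s)) (ρ : Equiv.Perm (Fin t)) :
    (List.ofFn fun i => Y (σ i)).prod * z₁ * (List.ofFn fun j => Y' (ρ j)).prod * z₂
      = (List.ofFn Y).prod * z₁ * (List.ofFn Y').prod * z₂ := by
  subst hAp hAm
  obtain ⟨a₁, rfl⟩ := hz₁
  obtain ⟨a₂, rfl⟩ := hz₂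
  have hTriangular : ∀ M ∈ {M | ∃ d a c g : K, M = !![d, a, c; 0, g, a; 0, 0, d]},
      M.IsUpperTriangular := by
    rintro M ⟨d, a, c, g, rfl⟩
    exact Matrix.isUpperTriangular_fin_three d a c g a d
  have hYt := fun i => hTriangular _ (hY i)
  have hY't := fun j => hTriangular _ (hY' j)
  open Matrix in
  rw [IsUpperTriangular.mul_skew_mul_mul_skew (isUpperTriangular_prod_ofFn fun i => hYt (σ i))
      (isUpperTriangular_prod_ofFn fun j => hY't (ρ j)),
    IsUpperTriangular.mul_skew_mul_mul_skew (isUpperTriangular_prod_ofFn hYt)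
      (isUpperTriangular_prod_ofFn hY't),
    IsUpperTriangular.prod_ofFn_perm_apply_self hYt,
    IsUpperTriangular.prod_ofFn_perm_apply_self hY't]
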